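/- arXiv:2112.14403 — 5 statements merged into one kernel-verified Lean document; each statement's English description precedes it below -/
import Mathlib

section
/- Let f, g be maps (nonnegative functions on finite domains) such that S_k(f) ≥ S_k(g) for all k ∈ ℕ, where S_k denotes the sum of the k largest outputs. Let x be an element not in dom f ∪ dom g, and let y ∈ ℕ. Then for all k ∈ ℕ, S_k(f ∪ (x,y)) ≥ S_k(g ∪ (x,y)), where f ∪ (x,y) extends f by mapping x to y. -/
/-- `Sk s f k`: the sum of the `k` largest outputs of the map `f` with domain `s`
(counting multiplicity; equal to the total sum when `k` exceeds `|dom f|`, and `0` when `k = 0`). -/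
def Sk {α : Type*} (s : Finset α) (f : α → ℕ) (k : ℕ) : ℕ :=
  (((s.val.map f).sort (· ≥ ·)).take k).sum

lemma take_sum_le_aux (l : List ℕ) (y : ℕ) (h : ∀ a ∈ l, a ≤ y) (k : ℕ) :
    (l.take (k+1)).sum ≤ y + (l.take k).sum := by
  rw [List.take_succ, List.sum_append]
  cases h' : l[k]? with
  | none => simp [h']
  | some a =>
    have : a ≤ y := h a (List.mem_of_getElem? h')
    simp [h']; omega

lemma orderedInsert_take_sum (y : ℕ) : ∀ (l : List ℕ), l.Pairwise (· ≥ ·) → ∀ k,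
    ((l.orderedInsert (· ≥ ·) y).take (k+1)).sum = max ((l.take (k+1)).sum) (y + (l.take k).sum)
  | [], _, k => by simp
  | a :: t, hs, k => by
    by_cases hya : y ≥ a
    · have hle : ∀ b ∈ a :: t, b ≤ y := by
        intro b hb
        rcases List.mem_cons.1 hb with rfl | hb
        · exact hya
        · exact le_trans (List.rel_of_pairwise_cons hs hb) hya
      rw [List.orderedInsert, if_pos hya]
      have := take_sum_le_aux (a :: t) y hle k
      simp only [List.take_succ_cons, List.sum_cons] at *
      omega
    · rw [List.orderedInsert, if_neg hya]
      cases k with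
      | zero =>
        simp
        omega
      | succ k =>
        simp only [List.take_succ_cons, List.sum_cons]
        rw [orderedInsert_take_sum y t hs.tail k, ← max_add_add_left]
        omega

lemma sort_cons_my (y : ℕ) (M : Multiset ℕ) :
    (y ::ₘ M).sort (· ≥ ·) = (M.sort (· ≥ ·)).orderedInsert (· ≥ ·) y := by
  have hp : List.Perm ((y ::ₘ M).sort (· ≥ ·)) ((M.sort (· ≥ ·)).orderedInsert (· ≥ ·) y) := by
    apply Multiset.coe_eq_coe.mp
    rw [Multiset.sort_eq]
    have h2 : ((M.sort (· ≥ ·)).orderedInsert (· ≥ ·) y : Multiset ℕ) =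
        ((y :: M.sort (· ≥ ·) : List ℕ) : Multiset ℕ) :=
      Multiset.coe_eq_coe.mpr (List.perm_orderedInsert _ _ _)
    rw [h2, ← Multiset.cons_coe, Multiset.sort_eq]
  exact List.Perm.eq_of_pairwise' (Multiset.pairwise_sort _ _)
    ((Multiset.pairwise_sort M _).orderedInsert y _) hp

lemma Sk_insert {α : Type*} [DecidableEq α] (s : Finset α) (f : α → ℕ) (x : α)
    (hx : x ∉ s) (y k : ℕ) :
    Sk (insert x s) (Function.update f x y) (k+1) = max (Sk s f (k+1)) (y + Sk s f k) := by
  have hm : (insert x s).val.map (Function.update f x y) = y ::ₘ s.val.map f := by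
    rw [Finset.insert_val_of_notMem hx, Multiset.map_cons, Function.update_self]
    congr 1
    apply Multiset.map_congr rfl
    intro a ha
    have hax : a ≠ x := by rintro rfl; exact hx (Finset.mem_def.mpr ha)
    exact Function.update_of_ne hax _ _
  unfold Sk
  rw [hm, sort_cons_my, orderedInsert_take_sum y _ (Multiset.pairwise_sort _ _)]

/-- if `S_k(f) ≥ S_k(g)` for all `k`, and `x ∉ dom f ∪ dom g`, then for all `k`,
`S_k(f ∪ (x,y)) ≥ S_k(g ∪ (x,y))`. -/
theorem sk_union_single {α : Type*} [DecidableEq α] (sf sg : Finset α) (f g : α → ℕ)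
    (hk : ∀ k, Sk sg g k ≤ Sk sf f k) (x : α) (hx : x ∉ sf ∪ sg) (y : ℕ) :
    ∀ k, Sk (insert x sg) (Function.update g x y) k ≤ Sk (insert x sf) (Function.update f x y) k := by
  have hxf : x ∉ sf := fun h => hx (Finset.mem_union_left _ h)
  have hxg : x ∉ sg := fun h => hx (Finset.mem_union_right _ h)
  intro k
  cases k with
  | zero => simp [Sk]
  | succ k =>
    rw [Sk_insert sg g x hxg y k, Sk_insert sf f x hxf y k]
    exact max_le_max (hk _) (Nat.add_le_add_left (hk _) y)
end

section
/- Let f, g, h be maps with dom f ∩ dom h = ∅, dom g ∩ dom h = ∅, and S_k(f) ≥ S_k(g) for all k ∈ ℕ. Then S_k(f ∪ h) ≥ S_k(g ∪ h) for all k ∈ ℕ. -/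
/-- `Tk m k`: sum of the `k` largest elements of the multiset `m`. -/
def Tk (m : Multiset ℕ) (k : ℕ) : ℕ := ((m.sort (· ≥ ·)).take k).sum

lemma take_succ_sum_le (c : ℕ) (l : List ℕ) (hc : ∀ x ∈ l, x ≤ c) :
    ∀ j : ℕ, (l.take (j+1)).sum ≤ (l.take j).sum + c := by
  induction l with
  | nil => intro j; simp
  | cons a l ih =>
    intro j
    cases j with
    | zero => simpa using hc a (by simp)
    | succ j =>
      simp only [List.take_succ_cons, List.sum_cons]
      have := ih (fun x hx => hc x (by simp [hx])) j
      omega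

lemma take_sum_orderedInsert (c : ℕ) (l : List ℕ) (hl : l.Pairwise (· ≥ ·)) :
    ∀ k : ℕ, k ≠ 0 →
      ((l.orderedInsert (· ≥ ·) c).take k).sum =
        max ((l.take k).sum) ((l.take (k-1)).sum + c) := by
  induction l with
  | nil =>
    intro k hk
    obtain ⟨k, rfl⟩ := Nat.exists_eq_succ_of_ne_zero hk
    simp [List.orderedInsert]
  | cons a l ih =>
    intro k hk
    obtain ⟨k, rfl⟩ := Nat.exists_eq_succ_of_ne_zero hk
    simp only [List.orderedInsert]
    by_cases hca : c ≥ a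
    · rw [if_pos hca]
      have hle : ((a :: l).take (k+1)).sum ≤ ((a :: l).take k).sum + c := by
        apply take_succ_sum_le
        intro x hx
        rcases List.mem_cons.1 hx with rfl | hx
        · exact hca
        · exact le_trans (List.rel_of_pairwise_cons hl hx) hca
      simp only [Nat.succ_eq_add_one, Nat.add_sub_cancel]
      rw [max_eq_right hle]
      simp only [List.take_succ_cons, List.sum_cons]
      omega
    · rw [if_neg hca]
      push_neg at hca
      cases k with
      | zero =>
        rw [max_eq_left]
        · simp
        · simp [hca.le]
      | succ k =>
        have hl' : l.Pairwise (· ≥ ·) := hl.of_cons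
        have := ih hl' (k+1) (by omega)
        simp only [List.take_succ_cons, List.sum_cons, Nat.succ_sub_one,
          Nat.add_sub_cancel] at this ⊢
        rw [this]
        rcases le_total ((l.take (k+1)).sum) ((l.take k).sum + c) with h' | h'
        · rw [max_eq_right h', max_eq_right (by omega)]
          omega
        · rw [max_eq_left h', max_eq_left (by omega)]

lemma sort_cons (c : ℕ) (m : Multiset ℕ) :
    (c ::ₘ m).sort (· ≥ ·) = (m.sort (· ≥ ·)).orderedInsert (· ≥ ·) c := by
  have h1 : ((c ::ₘ m).sort (· ≥ ·) : Multiset ℕ) =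
      ((c :: m.sort (· ≥ ·) : List ℕ) : Multiset ℕ) := by
    rw [Multiset.sort_eq, ← Multiset.cons_coe, Multiset.sort_eq]
  have hperm : ((c ::ₘ m).sort (· ≥ ·)).Perm ((m.sort (· ≥ ·)).orderedInsert (· ≥ ·) c) :=
    (Quotient.exact h1).trans (List.perm_orderedInsert _ _ _).symm
  exact List.Perm.eq_of_pairwise' (Multiset.pairwise_sort _ _)
    ((Multiset.pairwise_sort m _).orderedInsert c _) hperm

lemma Tk_cons (c : ℕ) (m : Multiset ℕ) (k : ℕ) (hk : k ≠ 0) :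
    Tk (c ::ₘ m) k = max (Tk m k) (Tk m (k-1) + c) := by
  unfold Tk
  rw [sort_cons]
  exact take_sum_orderedInsert c _ (Multiset.pairwise_sort m _) k hk

lemma Tk_add_le (A B C : Multiset ℕ) (h : ∀ k, Tk B k ≤ Tk A k) :
    ∀ k, Tk (B + C) k ≤ Tk (A + C) k := by
  induction C using Multiset.induction with
  | empty => simpa using h
  | cons c C ih =>
    intro k
    have h1 : B + (c ::ₘ C) = c ::ₘ (B + C) := by
      rw [add_comm, Multiset.cons_add, add_comm]
    have h2 : A + (c ::ₘ C) = c ::ₘ (A + C) := by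
      rw [add_comm, Multiset.cons_add, add_comm]
    rcases Nat.eq_zero_or_pos k with rfl | hk
    · simp [Tk]
    · rw [h1, h2, Tk_cons _ _ _ (by omega), Tk_cons _ _ _ (by omega)]
      exact max_le_max (ih k) (Nat.add_le_add_right (ih (k-1)) c)

lemma map_union_eq {α : Type*} [DecidableEq α] (s t : Finset α) (f h : α → ℕ)
    (hd : Disjoint s t) :
    (s ∪ t).val.map (fun a => if a ∈ t then h a else f a) = s.val.map f + t.val.map h := by
  rw [← Finset.disjUnion_eq_union s t hd]
  show (s.val + t.val).map _ = _
  rw [Multiset.map_add]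
  congr 1
  · apply Multiset.map_congr rfl
    intro a ha
    rw [if_neg (Finset.disjoint_left.1 hd (Finset.mem_def.mpr ha))]
  · apply Multiset.map_congr rfl
    intro a ha
    rw [if_pos (Finset.mem_def.mpr ha)]

/-- if `dom f ∩ dom h = ∅`, `dom g ∩ dom h = ∅`, and `S_k(f) ≥ S_k(g)` for
all `k`, then `S_k(f ∪ h) ≥ S_k(g ∪ h)` for all `k`. -/
theorem sk_union_map {α : Type*} [DecidableEq α] (sf sg sh : Finset α) (f g h : α → ℕ)
    (hfh : Disjoint sf sh) (hgh : Disjoint sg sh)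
    (hk : ∀ k, Sk sg g k ≤ Sk sf f k) :
    ∀ k, Sk (sg ∪ sh) (fun a => if a ∈ sh then h a else g a) k ≤
         Sk (sf ∪ sh) (fun a => if a ∈ sh then h a else f a) k := by
  intro k
  show Tk ((sg ∪ sh).val.map _) k ≤ Tk ((sf ∪ sh).val.map _) k
  rw [map_union_eq sg sh g h hgh, map_union_eq sf sh f h hfh]
  exact Tk_add_le _ _ _ hk k
end

section
/- Let f and g be maps such that f majorizes g. For any map f' dominated by f, there exists a map g' dominated by g such that S(g'²) ≤ S(f'²) and S(g') ≥ (1/4)·S(f'). -/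
section Aux

/-- Reduce a function below `h` to achieve any sum `m` not exceeding the sum of `h`. -/
lemma exists_le_sum_eq {β : Type*} [DecidableEq β] (s : Finset β) (h : β → ℕ) :
    ∀ m : ℕ, m ≤ ∑ i ∈ s, h i → ∃ h' : β → ℕ, (∀ i, h' i ≤ h i) ∧ ∑ i ∈ s, h' i = m := by
  induction s using Finset.induction with
  | empty =>
      intro m hm
      simp only [Finset.sum_empty, Nat.le_zero] at hm
      exact ⟨fun _ => 0, fun _ => Nat.zero_le _, by simp [hm]⟩
  | @insert a s ha ih =>
      intro m hm
      rw [Finset.sum_insert ha] at hm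
      have h1 : m - min m (h a) ≤ ∑ i ∈ s, h i := by omega
      obtain ⟨h', hle, hsum⟩ := ih _ h1
      refine ⟨Function.update h' a (min m (h a)), ?_, ?_⟩
      · intro i
        by_cases hi : i = a
        · subst hi; simp
        · simp [Function.update_of_ne hi]; exact hle i
      · rw [Finset.sum_insert ha, Function.update_self]
        have : ∑ i ∈ s, Function.update h' a (min m (h a)) i = ∑ i ∈ s, h' i :=
          Finset.sum_congr rfl fun i hi =>
            Function.update_of_ne (by rintro rfl; exact ha hi) _ _
        rw [this, hsum]; omega

/-- In a descending-sorted list, the elements `≥ t` form a prefix. -/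
lemma sorted_filter_eq_take (t : ℕ) (w : List ℕ) (hw : w.Pairwise (· ≥ ·)) :
    w.filter (fun x => decide (t ≤ x)) = w.take (w.countP (fun x => decide (t ≤ x))) := by
  induction w with
  | nil => simp
  | cons a w ih =>
      rw [List.pairwise_cons] at hw
      by_cases hat : t ≤ a
      · have hcount : (a :: w).countP (fun x => decide (t ≤ x))
            = w.countP (fun x => decide (t ≤ x)) + 1 := by
          rw [List.countP_cons]; simp [hat]
        rw [hcount, List.filter_cons]
        simp only [hat, decide_true, if_true, List.take_succ_cons]
        rw [ih hw.2]
      · have hall : ∀ x ∈ w, ¬ (t ≤ x) := fun x hx hle => hat (le_trans hle (hw.1 x hx))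
        have hcount : (a :: w).countP (fun x => decide (t ≤ x)) = 0 := by
          rw [List.countP_eq_zero]
          intro x hx
          rcases List.mem_cons.1 hx with rfl | hx
          · simpa using hat
          · simpa using hall x hx
        rw [hcount, List.take_zero, List.filter_eq_nil_iff]
        intro x hx
        rcases List.mem_cons.1 hx with rfl | hx
        · simpa using hat
        · simpa using hall x hx

/-- Cauchy–Schwarz for lists of naturals. -/
lemma int_cauchy_step (a S n Q : ℤ) (hn : 0 ≤ n) (hQ : 0 ≤ Q)
    (ih : S ^ 2 ≤ n * Q) : (a + S) ^ 2 ≤ (n + 1) * (a ^ 2 + Q) := by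
  rcases eq_or_lt_of_le hn with h0 | hpos
  · have hS : S = 0 := by nlinarith [sq_nonneg S]
    subst hS
    nlinarith [hQ]
  · nlinarith [sq_nonneg (n * a - S), mul_nonneg hn (sub_nonneg.2 ih), ih,
      mul_pos hpos hpos]

lemma list_cauchy (l : List ℕ) :
    l.sum ^ 2 ≤ l.length * (l.map (fun x => x ^ 2)).sum := by
  induction l with
  | nil => simp
  | cons a l ih =>
      have key := int_cauchy_step (a : ℤ) (l.sum : ℤ) (l.length : ℤ)
        (((l.map fun x => x ^ 2).sum : ℕ) : ℤ) (by positivity) (by positivity)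
        (by exact_mod_cast ih)
      simp only [List.sum_cons, List.length_cons, List.map_cons]
      exact_mod_cast key

/-- Every natural is at most its square, summed over a list. -/
lemma list_sum_le_sum_sq (l : List ℕ) : l.sum ≤ (l.map (fun x => x ^ 2)).sum := by
  induction l with
  | nil => simp
  | cons a l ih =>
      simp only [List.sum_cons, List.map_cons]
      have : a ≤ a ^ 2 := Nat.le_self_pow two_ne_zero a
      omega

/-- Pointwise comparison of mapped list sums. -/
lemma list_map_sum_le {α : Type*} (l : List α) (f g : α → ℕ) (h : ∀ i ∈ l, f i ≤ g i) :
    (l.map f).sum ≤ (l.map g).sum := by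
  induction l with
  | nil => simp
  | cons a l ih =>
      simp only [List.map_cons, List.sum_cons]
      have h1 := h a List.mem_cons_self
      have h2 := ih fun i hi => h i (List.mem_cons_of_mem a hi)
      omega

end Aux

/-- if `f` majorizes `g`, then for any map `f'` dominated by `f` there is a
map `g'` dominated by `g` with `S(g'²) ≤ S(f'²)` and `S(g') ≥ (1/4)·S(f')`. -/
theorem exists_dominated_proper {α β : Type*} (sf : Finset α) (sg : Finset β)
    (f : α → ℕ) (g : β → ℕ)
    (hsum : ∑ i ∈ sf, f i = ∑ i ∈ sg, g i)
    (hmaj : ∀ k, Sk sg g k ≤ Sk sf f k)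
    (f' : α → ℕ) (hf' : ∀ i ∈ sf, f' i ≤ f i) :
    ∃ g' : β → ℕ, (∀ i ∈ sg, g' i ≤ g i) ∧
      (∑ i ∈ sg, (g' i) ^ 2 ≤ ∑ i ∈ sf, (f' i) ^ 2) ∧
      (∑ i ∈ sf, f' i ≤ 4 * ∑ i ∈ sg, g' i) := by
  classical
  set s := ∑ i ∈ sf, f' i with hsdef
  by_cases hs0 : s = 0
  · exact ⟨fun _ => 0, fun i _ => Nat.zero_le _, by simp, by simp [← hsdef, hs0]⟩
  have hs1 : 1 ≤ s := Nat.one_le_iff_ne_zero.2 hs0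
  -- sorted list of the domain of f
  haveI instTot : IsTotal α (fun i j => f j ≤ f i) := ⟨fun a b => le_total (f b) (f a)⟩
  haveI instTrans : IsTrans α (fun i j => f j ≤ f i) := ⟨fun a b c h1 h2 => le_trans h2 h1⟩
  set L : List α := List.insertionSort (fun i j => f j ≤ f i) sf.toList with hLdef
  have hLperm : L.Perm sf.toList := List.perm_insertionSort _ sf.toList
  have hLsorted : L.Pairwise (fun i j => f j ≤ f i) := List.pairwise_insertionSort _ sf.toList
  have hLmem : ∀ i ∈ L, i ∈ sf := fun i hi => (Finset.mem_toList).1 (hLperm.mem_iff.1 hi)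
  have hLval : (↑L : Multiset α) = sf.val := by
    rw [Multiset.coe_eq_coe.2 hLperm, Finset.coe_toList]
  set A := L.map f with hAdef
  set A' := L.map f' with hA'def
  have hAsorted : A.Pairwise (· ≥ ·) := List.Pairwise.map f (fun a b h => h) hLsorted
  have hA_eq : (sf.val.map f).sort (· ≥ ·) = A := by
    apply List.Perm.eq_of_pairwise' (Multiset.pairwise_sort _ _) hAsorted
    rw [← Multiset.coe_eq_coe, Multiset.sort_eq, hAdef, ← Multiset.map_coe, hLval]
  have hSkf : ∀ n, Sk sf f n = (A.take n).sum := fun n => by rw [Sk, hA_eq]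
  have hA'sum : A'.sum = s := by
    have h1 : (↑A' : Multiset ℕ) = sf.val.map f' := by
      rw [hA'def, ← Multiset.map_coe, hLval]
    have h2 : (↑A' : Multiset ℕ).sum = A'.sum := Multiset.sum_coe _
    rw [← h2, h1]; rfl
  have hAsum : A.sum = ∑ i ∈ sf, f i := by
    have h1 : (↑A : Multiset ℕ) = sf.val.map f := by
      rw [hAdef, ← Multiset.map_coe, hLval]
    have h2 : (↑A : Multiset ℕ).sum = A.sum := Multiset.sum_coe _
    rw [← h2, h1]; rfl
  -- the index k
  have hPex : ∃ n, (s + 1) / 2 ≤ (A'.take n).sum := by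
    refine ⟨A'.length, ?_⟩
    rw [List.take_length, hA'sum]; omega
  set k := Nat.find hPex with hkdef
  have hk : (s + 1) / 2 ≤ (A'.take k).sum := Nat.find_spec hPex
  have hkmin : ∀ j, j < k → (A'.take j).sum < (s + 1) / 2 := fun j hj =>
    Nat.lt_of_not_le (Nat.find_min hPex hj)
  have hk1 : 1 ≤ k := by
    rcases Nat.eq_zero_or_pos k with h0 | h; · exfalso; rw [h0] at hk; simp at hk; omega
    exact h
  -- the threshold t
  set t := (s + 4 * k - 1) / (4 * k) with htdef
  have hdm := Nat.div_add_mod (s + 4 * k - 1) (4 * k)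
  have hmlt : (s + 4 * k - 1) % (4 * k) < 4 * k := Nat.mod_lt _ (by omega)
  rw [← htdef] at hdm
  rw [show 4 * k * t = 4 * (k * t) by ring] at hdm
  obtain ⟨htlow, hthigh⟩ : s ≤ 4 * (k * t) ∧ 4 * (k * t) ≤ s + 4 * k - 1 := by
    generalize hu : k * t = u at hdm
    generalize hr : (s + 4 * k - 1) % (4 * k) = r at hdm hmlt
    omega
  -- target sum m
  set m := (s + 3) / 4 with hmdef
  -- sorted values of g
  set w := (sg.val.map g).sort (· ≥ ·) with hwdef
  have hwsorted : w.Pairwise (· ≥ ·) := Multiset.pairwise_sort _ _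
  have hwval : (↑w : Multiset ℕ) = sg.val.map g := Multiset.sort_eq _ _
  set F := sg.filter (fun i => t ≤ g i) with hFdef
  -- the crux: the sum of min (g i) t is at least m
  have hcrux : m ≤ ∑ i ∈ sg, min (g i) t := by
    have hsub : ∑ i ∈ F, min (g i) t ≤ ∑ i ∈ sg, min (g i) t :=
      Finset.sum_le_sum_of_subset (Finset.filter_subset _ _)
    by_cases hc : k ≤ F.card
    · have hconst : ∑ i ∈ F, min (g i) t = F.card * t := by
        rw [Finset.sum_congr rfl (fun i hi => min_eq_right (Finset.mem_filter.1 hi).2),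
          Finset.sum_const, smul_eq_mul]
      have e1 : k * t ≤ F.card * t := Nat.mul_le_mul_right t hc
      have e2 : k * t ≤ ∑ i ∈ sg, min (g i) t := by
        rw [← hconst] at e1; exact e1.trans hsub
      generalize hu : k * t = u at htlow e2
      omega
    · have hcnt : F.card < k := Nat.lt_of_not_le hc
      -- the complement sum
      have hsplit : ∑ i ∈ F, g i + ∑ i ∈ sg.filter (fun i => ¬ t ≤ g i), g i
          = ∑ i ∈ sg, g i := Finset.sum_filter_add_sum_filter_not sg _ g
      have hmin_ge : ∑ i ∈ sg.filter (fun i => ¬ t ≤ g i), g i ≤ ∑ i ∈ sg, min (g i) t := by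
        refine le_trans (le_of_eq (Finset.sum_congr rfl fun i hi => ?_))
          (Finset.sum_le_sum_of_subset (Finset.filter_subset _ _))
        exact (min_eq_left (le_of_not_ge (Finset.mem_filter.1 hi).2)).symm
      -- sum over F equals Sk sg g F.card
      have hFsum : ∑ i ∈ F, g i = Sk sg g F.card := by
        have e1 : ∑ i ∈ F, g i = ((sg.val.filter (fun i => t ≤ g i)).map g).sum := by
          rw [Finset.sum, hFdef, Finset.filter_val]
        have e2 : (sg.val.filter (fun i => t ≤ g i)).map g
            = (sg.val.map g).filter (fun x => t ≤ x) := by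
          rw [Multiset.filter_map]; rfl
        have e3 : ((sg.val.map g).filter (fun x => t ≤ x) : Multiset ℕ)
            = ↑(w.filter (fun x => decide (t ≤ x))) := by
          rw [← hwval, Multiset.filter_coe]
        have e4 : (w.filter (fun x => decide (t ≤ x))).sum
            = (w.take (w.countP (fun x => decide (t ≤ x)))).sum := by
          rw [sorted_filter_eq_take t w hwsorted]
        have e5 : w.countP (fun x => decide (t ≤ x)) = F.card := by
          have : Multiset.countP (fun x => t ≤ x) (↑w : Multiset ℕ)
              = w.countP (fun x => decide (t ≤ x)) := rfl
          rw [← this, hwval, Multiset.countP_eq_card_filter, ← e2, Multiset.card_map]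
          rfl
        calc ∑ i ∈ F, g i
            = ((sg.val.map g).filter (fun x => t ≤ x)).sum := by rw [e1, e2]
          _ = (w.filter (fun x => decide (t ≤ x))).sum := by
              rw [e3, Multiset.sum_coe]
          _ = (w.take (F.card)).sum := by rw [e4, e5]
          _ = Sk sg g F.card := by rw [Sk, ← hwdef]
      have hmaj' := hmaj F.card
      rw [hSkf] at hmaj'
      have hAsplit : (A.take F.card).sum + (A.drop F.card).sum = A.sum := by
        rw [← List.sum_append, List.take_append_drop]
      have hA'split : (A'.take F.card).sum + (A'.drop F.card).sum = A'.sum := by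
        rw [← List.sum_append, List.take_append_drop]
      have hdropmono : (A'.drop F.card).sum ≤ (A.drop F.card).sum := by
        rw [hA'def, hAdef, ← List.map_drop, ← List.map_drop]
        exact list_map_sum_le _ f' f fun i hi => hf' i (hLmem i (List.mem_of_mem_drop hi))
      have hjlt : (A'.take F.card).sum < (s + 1) / 2 := hkmin _ hcnt
      rw [hA'sum] at hA'split
      rw [hAsum, hsum] at hAsplit
      omega
  -- build g'
  obtain ⟨g', hg'le, hg'sum⟩ := exists_le_sum_eq sg (fun i => min (g i) t) m hcrux
  have hg't : ∀ i, g' i ≤ t := fun i => le_trans (hg'le i) (min_le_right _ _)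
  refine ⟨g', fun i _ => le_trans (hg'le i) (min_le_left _ _), ?_, ?_⟩
  · -- sum of squares
    have hstep1 : ∑ i ∈ sg, g' i ^ 2 ≤ t * m := by
      calc ∑ i ∈ sg, g' i ^ 2 ≤ ∑ i ∈ sg, t * g' i := by
            refine Finset.sum_le_sum fun i _ => ?_
            rw [sq]; exact Nat.mul_le_mul_right _ (hg't i)
        _ = t * m := by rw [← Finset.mul_sum, hg'sum]
    refine hstep1.trans ?_
    -- key arithmetic: t * m ≤ sum of squares of the top k values of f'
    set X := (A'.take k).sum with hXdef
    set Q := ((A'.take k).map (fun x => x ^ 2)).sum with hQdef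
    have hQle : Q ≤ ∑ i ∈ sf, f' i ^ 2 := by
      have e1 : Q + ((A'.drop k).map (fun x => x ^ 2)).sum = (A'.map (fun x => x ^ 2)).sum := by
        rw [hQdef, ← List.sum_append, ← List.map_append, List.take_append_drop]
      have e2 : (A'.map (fun x => x ^ 2)).sum = ∑ i ∈ sf, f' i ^ 2 := by
        have h1 : (↑(A'.map (fun x => x ^ 2)) : Multiset ℕ) = sf.val.map (fun i => f' i ^ 2) := by
          rw [hA'def, List.map_map, ← Multiset.map_coe, hLval]; rfl
        have h2 := Multiset.sum_coe (A'.map (fun x => x ^ 2))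
        rw [← h2, h1]; rfl
      omega
    refine le_trans ?_ hQle
    -- show t * m ≤ Q
    have hXQ : X ^ 2 ≤ k * Q := by
      have hcs := list_cauchy (A'.take k)
      have hlen : (A'.take k).length ≤ k := by
        rw [List.length_take]; exact min_le_left _ _
      exact hcs.trans (Nat.mul_le_mul_right _ hlen)
    have hX : (s + 1) / 2 ≤ X := hk
    by_cases hbig : 4 * k ≤ s
    · -- main case: use Cauchy-Schwarz
      have hXs : s ≤ 2 * X := by omega
      have hm4 : 4 * m ≤ s + 3 := by omega
      have hkt2s : 4 * (k * t) ≤ 2 * s := by omega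
      have hgoal : 16 * (k * (t * m)) ≤ 16 * (k * Q) := by
        have p1 : (4 * (k * t)) * (4 * m) ≤ (2 * s) * (s + 3) := Nat.mul_le_mul hkt2s hm4
        have p2 : s * s ≤ (2 * X) * (2 * X) := Nat.mul_le_mul hXs hXs
        have p3 : X ^ 2 ≤ k * Q := hXQ
        nlinarith [p1, p2, p3, hbig, hs1]
      exact Nat.le_of_mul_le_mul_left
        (Nat.le_of_mul_le_mul_left hgoal (by omega : 0 < 16)) (by omega : 0 < k)
    · -- small case: t = 1
      have ht1 : t = 1 := by
        rw [htdef]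
        have h1 : 1 * (4 * k) ≤ s + 4 * k - 1 := by omega
        have h2 : s + 4 * k - 1 < 2 * (4 * k) := by omega
        exact Nat.div_eq_of_lt_le h1 h2
      have hXQ' : X ≤ Q := list_sum_le_sum_sq _
      calc t * m = m := by rw [ht1, one_mul]
        _ ≤ (s + 1) / 2 := by omega
        _ ≤ X := hX
        _ ≤ Q := hXQ'
  · -- the factor-4 bound
    rw [hg'sum]
    omega
end

section
/- Let f be a map with values sorted so that f(b₁) ≥ f(b₂) ≥ ... over its domain, let j index an element with target value v > f(b_x) for a starting index x, and suppose there exists y ≤ |dom f| with Σ_{k=x}^{y} f(b_k) ≥ v/2; take y minimal with this property. Then Σ_{k=x}^{y} f(b_k) < v. -/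
open Finset

theorem List.antitone_getD_of_pairwise_ge {α : Type*} [Preorder α] [OrderBot α] {L : List α}
    (hL : L.Pairwise (· ≥ ·)) : Antitone (L.getD · ⊥) := by
  intro i j hij
  dsimp only
  by_cases hj : j < L.length
  · rw [List.getD_eq_getElem _ _ hj, List.getD_eq_getElem _ _ (hij.trans_lt hj)]
    exact hL.sortedGE.antitone_get (Fin.mk_le_mk.mpr hij)
  · rw [List.getD_eq_default _ _ (not_lt.mp hj)]
    exact bot_le

theorem Nat.sum_Icc_le_of_le (f : ℕ → ℕ) {x y : ℕ} (hyx : y ≤ x) :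
    ∑ k ∈ Icc x y, f k ≤ f x := by
  calc ∑ k ∈ Icc x y, f k ≤ ∑ k ∈ {x}, f k :=
        sum_le_sum_of_subset fun k hk => mem_singleton.mpr (by grind)
    _ = f x := sum_singleton f x

/-- The new term is at most the first one, hence at most the old sum. -/
theorem Nat.sum_Icc_succ_lt_of_two_mul_sum_lt {f : ℕ → ℕ} (hf : Antitone f) {x y v : ℕ}
    (hxy : x ≤ y) (h : 2 * ∑ k ∈ Icc x y, f k < v) : ∑ k ∈ Icc x (y + 1), f k < v := by
  have hfirst : f x ≤ ∑ k ∈ Icc x y, f k :=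
    single_le_sum (fun _ _ => Nat.zero_le _) (left_mem_Icc.mpr hxy)
  have hnext : f (y + 1) ≤ f x := hf (by omega)
  rw [sum_Icc_succ_top (by omega)]
  omega

theorem minimal_block_sum_lt_general (L : List ℕ) (hL : L.Pairwise (· ≥ ·))
    (x y v : ℕ) (hx : x < L.length)
    (hv : L.get ⟨x, hx⟩ < v)
    (hmin : ∀ y', x ≤ y' → y' < y → 2 * ∑ k ∈ Finset.Icc x y', L.getD k 0 < v) :
    ∑ k ∈ Finset.Icc x y, L.getD k 0 < v := by
  have hanti : Antitone (L.getD · 0) := List.antitone_getD_of_pairwise_ge hL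
  have hvx : L.getD x 0 < v := by rwa [List.getD_eq_getElem _ _ hx]
  rcases Nat.lt_or_ge x y with hxy | hyx
  · obtain ⟨y', rfl⟩ : ∃ y', y = y' + 1 := ⟨y - 1, by omega⟩
    exact Nat.sum_Icc_succ_lt_of_two_mul_sum_lt hanti (by omega) (hmin y' (by omega) (by omega))
  · exact (Nat.sum_Icc_le_of_le _ hyx).trans_lt hvx

/-- let `L` list the values of a map in nonincreasing order, let `v` satisfy
`v > L[x]`, and let `y` be the least index `≥ x` with `∑_{k=x}^{y} L[k] ≥ v/2`.
Then `∑_{k=x}^{y} L[k] < v`. -/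
theorem minimal_block_sum_lt (L : List ℕ) (hL : L.Pairwise (· ≥ ·))
    (x y v : ℕ) (hx : x < L.length) (hy : y < L.length) (hxy : x ≤ y)
    (hv : L.get ⟨x, hx⟩ < v)
    (hge : v ≤ 2 * ∑ k ∈ Finset.Icc x y, L.getD k 0)
    (hmin : ∀ y', x ≤ y' → y' < y → 2 * ∑ k ∈ Finset.Icc x y', L.getD k 0 < v) :
    ∑ k ∈ Finset.Icc x y, L.getD k 0 < v :=
  minimal_block_sum_lt_general L hL x y v hx hv hmin
end

section
/- Let f be a map with S(f) ≥ 1 and 1 ≤ c ≤ S(f). For any k with 1 ≤ k ≤ lu(f,c) − 1, S_k(TR[f,c]) = S_k(f); and for any k ≥ lu(f,c), S_k(TR[f,c]) = c. -/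
/-!
Truncating at `c` caps every prefix sum at `c`: `S_k(TR[f,c]) = min (S_k(f), c)`.
Below `lu(f,c)` the prefix sum `S_k(f)` is still less than `c`, and from `lu(f,c)` on it is
at least `c` because prefix sums of a list of naturals are monotone in `k`.
-/

/-- Truncation of a (nonincreasingly sorted) list of values at `c`: keep values greedily
until the running total reaches `c`; the value where `c` is first reached is cut down and
all later values become `0`.  On a nonincreasing list this is exactly `TR[·, c]`. -/
def trunc : List ℕ → ℕ → List ℕ
  | [], _ => []
  | x :: xs, c => min x c :: trunc xs (c - min x c)

theorem sum_take_trunc (l : List ℕ) (c k : ℕ) :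
    ((trunc l c).take k).sum = min (l.take k).sum c := by
  induction l generalizing c k with
  | nil => simp [trunc]
  | cons x xs ih =>
    cases k with
    | zero => simp
    | succ k =>
      simp only [trunc, List.take_succ_cons, List.sum_cons, ih]
      omega

theorem sum_sort_map {α : Type*} (s : Finset α) (f : α → ℕ) :
    ((s.val.map f).sort (· ≥ ·)).sum = ∑ i ∈ s, f i := by
  rw [← Multiset.sum_coe, Multiset.sort_eq]
  rfl

theorem sInf_le_iff_le_sum_take {l : List ℕ} {c : ℕ} (hc : c ≤ l.sum) {k : ℕ} :
    sInf {j | c ≤ (l.take j).sum} ≤ k ↔ c ≤ (l.take k).sum := by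
  refine ⟨fun hk => ?_, fun hk => Nat.sInf_le hk⟩
  have hne : {j | c ≤ (l.take j).sum}.Nonempty := ⟨l.length, by simpa using hc⟩
  exact (Nat.sInf_mem hne).trans (l.monotone_sum_take hk)

theorem sk_trunc_eq_general {α : Type*} (s : Finset α) (f : α → ℕ)
    (c : ℕ) (hc2 : c ≤ ∑ i ∈ s, f i) :
    ∀ k : ℕ,
      (1 ≤ k → k ≤ sInf {j | c ≤ (((s.val.map f).sort (· ≥ ·)).take j).sum} - 1 →
        ((trunc ((s.val.map f).sort (· ≥ ·)) c).take k).sum =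
          (((s.val.map f).sort (· ≥ ·)).take k).sum) ∧
      (sInf {j | c ≤ (((s.val.map f).sort (· ≥ ·)).take j).sum} ≤ k →
        ((trunc ((s.val.map f).sort (· ≥ ·)) c).take k).sum = c) := by
  set L := (s.val.map f).sort (· ≥ ·)
  have hc : c ≤ L.sum := (sum_sort_map s f).symm ▸ hc2
  intro k
  rw [sum_take_trunc, sInf_le_iff_le_sum_take hc]
  refine ⟨fun hk1 hk => ?_, fun hk => min_eq_right hk⟩
  have hlt : k ∉ {j | c ≤ (L.take j).sum} := Nat.notMem_of_lt_sInf (by omega)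
  exact min_eq_left (not_le.mp hlt).le

/-- let `f` be a map with `S(f) ≥ 1` and `1 ≤ c ≤ S(f)`, and let
`lu(f,c)` be the least `k` with `S_k(f) ≥ c`.  For `1 ≤ k ≤ lu(f,c) − 1` we have
`S_k(TR[f,c]) = S_k(f)`, and for `k ≥ lu(f,c)` we have `S_k(TR[f,c]) = c`.
(Values of `f` are listed in nonincreasing order, so `S_k` is the sum of the first `k`
entries of the corresponding list.) -/
theorem sk_trunc_eq {α : Type*} (s : Finset α) (f : α → ℕ)
    (hS : 1 ≤ ∑ i ∈ s, f i) (c : ℕ) (hc1 : 1 ≤ c) (hc2 : c ≤ ∑ i ∈ s, f i) :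
    ∀ k : ℕ,
      (1 ≤ k → k ≤ sInf {j | c ≤ (((s.val.map f).sort (· ≥ ·)).take j).sum} - 1 →
        ((trunc ((s.val.map f).sort (· ≥ ·)) c).take k).sum =
          (((s.val.map f).sort (· ≥ ·)).take k).sum) ∧
      (sInf {j | c ≤ (((s.val.map f).sort (· ≥ ·)).take j).sum} ≤ k →
        ((trunc ((s.val.map f).sort (· ≥ ·)) c).take k).sum = c) :=
  sk_trunc_eq_general s f c hc2
end
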